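/- Let Φ : D(A) → D(B) be a derived equivalence of abelian surfaces with Φ^CH(0,0,1) = (r₀, l₀, χ₀), and fix distinct primes p₁, p₂. Then one can compose Φ with shifts, twists by line bundles, and the Poincaré equivalence S_B : D(B) → D(𝐵̂) to obtain an equivalence Ψ : D(A) → D(C), C ∈ {B, 𝐵̂}, such that the vector (r, l, χ) = Ψ^CH(0,0,1) satisfies: either r is coprime to p₁p₂, or exactly one of p₁, p₂ divides r and the other divides χ, with p₁ ∤ χ when p₁ | r and p₂ ∤ r when p₂ | χ (or vice versa). -/
import Mathlib


/-!
STATEMENT 15. `NB` and `NBh` model the Néron–Severi groups of an abelian surface `B`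
and its dual `B̂`, with intersection pairings `ipB`, `ipBh` and half-square functions
`halfB`, `halfBh` (on an abelian surface every class has even self-intersection).
`σ : NB ≃+ NBh` is the action of the Poincaré equivalence `S_B` on `NS`.
The available modifications of a derived equivalence act on the pair
`(Ψ^CH(0,0,1), Ψ^CH(1,0,0))` of Mukai vectors, simultaneously, by:
the shift (multiplication by `−1`), twists by line bundles, and `S_B` / its inverse
(which swap the first and third components).  `MukaiStep` is one such modification and
`Relation.ReflTransGen MukaiStep` is an arbitrary composition of them.
-/

/-- Mukai pairing on `ℤ ⊕ NS ⊕ ℤ`. -/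
def mukaiPair {N : Type*} [AddCommGroup N] (ip : N →+ N →+ ℤ)
    (v w : ℤ × N × ℤ) : ℤ :=
  ip v.2.1 w.2.1 - v.1 * w.2.2 - v.2.2 * w.1

/-- Action of the shift functor on Mukai vectors. -/
def shiftT {N : Type*} [AddCommGroup N] (v : ℤ × N × ℤ) : ℤ × N × ℤ :=
  (-v.1, -v.2.1, -v.2.2)

/-- Action of tensoring by `L^{⊗n}` (`b` the class of `L`, `half b = b²/2`) on Mukai
vectors: `(r,l,χ) ↦ (r, l + rn·b, χ + n·(l·b) + rn²·(b²/2))`. -/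
def twistT {N : Type*} [AddCommGroup N] (ip : N →+ N →+ ℤ) (half : N → ℤ)
    (b : N) (n : ℤ) (v : ℤ × N × ℤ) : ℤ × N × ℤ :=
  (v.1, v.2.1 + (v.1 * n) • b, v.2.2 + n * ip v.2.1 b + v.1 * n ^ 2 * half b)

/-- Action of the Poincaré equivalence `S_B` on Mukai vectors: it swaps the first and
third components, and acts by `σ` on the Néron–Severi component. -/
def poincareT {N N' : Type*} [AddCommGroup N] [AddCommGroup N']
    (σ : N ≃+ N') (v : ℤ × N × ℤ) : ℤ × N' × ℤ :=
  (v.2.2, σ v.2.1, v.1)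

/-- One modification step, applied simultaneously to the pair of Mukai vectors
`(Ψ^CH(0,0,1), Ψ^CH(1,0,0))`, on `B` (left) or on `B̂` (right). -/
def MukaiStep {NB NBh : Type*} [AddCommGroup NB] [AddCommGroup NBh]
    (ipB : NB →+ NB →+ ℤ) (ipBh : NBh →+ NBh →+ ℤ)
    (halfB : NB → ℤ) (halfBh : NBh → ℤ) (σ : NB ≃+ NBh)
    (x y : ((ℤ × NB × ℤ) × (ℤ × NB × ℤ)) ⊕ ((ℤ × NBh × ℤ) × (ℤ × NBh × ℤ))) : Prop :=
  (∃ v w, x = .inl (v, w) ∧ y = .inl (shiftT v, shiftT w)) ∨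
  (∃ v w, x = .inr (v, w) ∧ y = .inr (shiftT v, shiftT w)) ∨
  (∃ v w b n, x = .inl (v, w) ∧
      y = .inl (twistT ipB halfB b n v, twistT ipB halfB b n w)) ∨
  (∃ v w b n, x = .inr (v, w) ∧
      y = .inr (twistT ipBh halfBh b n v, twistT ipBh halfBh b n w)) ∨
  (∃ v w, x = .inl (v, w) ∧ y = .inr (poincareT σ v, poincareT σ w)) ∨
  (∃ v w, x = .inr (v, w) ∧ y = .inl (poincareT σ.symm v, poincareT σ.symm w))

/-- The rank component of the first Mukai vector of a pair. -/
def rkOf {NB NBh : Type*} [AddCommGroup NB] [AddCommGroup NBh]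
    (x : ((ℤ × NB × ℤ) × (ℤ × NB × ℤ)) ⊕ ((ℤ × NBh × ℤ) × (ℤ × NBh × ℤ))) : ℤ :=
  Sum.elim (fun vw => vw.1.1) (fun vw => vw.1.1) x

/-- The Euler-characteristic component of the first Mukai vector of a pair. -/
def chiOf {NB NBh : Type*} [AddCommGroup NB] [AddCommGroup NBh]
    (x : ((ℤ × NB × ℤ) × (ℤ × NB × ℤ)) ⊕ ((ℤ × NBh × ℤ) × (ℤ × NBh × ℤ))) : ℤ :=
  Sum.elim (fun vw => vw.1.2.2) (fun vw => vw.1.2.2) x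


private lemma stmt15.coprime_of_not_dvd {p : ℕ} (hp : p.Prime) {r : ℤ} (h : ¬ (p:ℤ) ∣ r) :
    IsCoprime r (p:ℤ) :=
  (((Nat.prime_iff_prime_int.mp hp)).coprime_iff_not_dvd.mpr h).symm

private lemma stmt15.crtZ {p₁ p₂ : ℤ} (hco : IsCoprime p₁ p₂) (n₁ n₂ : ℤ) :
    ∃ n, p₁ ∣ (n - n₁) ∧ p₂ ∣ (n - n₂) := by
  obtain ⟨u, v, huv⟩ := hco
  exact ⟨n₁*(v*p₂) + n₂*(u*p₁), ⟨(n₂-n₁)*u, by linear_combination n₁*huv⟩,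
    ⟨(n₁-n₂)*v, by linear_combination n₂*huv⟩⟩

/-- Proposition 5.1: starting from the pair `(v₀, w₀) = (Φ^CH(0,0,1), Φ^CH(1,0,0))`
(which has Mukai pairing `1`), one can reach, by composing with shifts, line-bundle
twists and the Poincaré equivalence (landing on `B` or on `B̂`), a pair whose first
vector `(r, l, χ)` satisfies: either `r` is coprime to both `p₁` and `p₂`, or exactly
one of `p₁, p₂` divides `r` but not `χ` while the other divides `χ` but not `r`. -/
theorem stmt15 {NB NBh : Type*} [AddCommGroup NB] [AddCommGroup NBh]
    (ipB : NB →+ NB →+ ℤ) (ipBh : NBh →+ NBh →+ ℤ)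
    (halfB : NB → ℤ) (halfBh : NBh → ℤ)
    (hhB : ∀ b, 2 * halfB b = ipB b b) (hhBh : ∀ b, 2 * halfBh b = ipBh b b)
    (σ : NB ≃+ NBh) (hσ : ∀ a b, ipBh (σ a) (σ b) = ipB a b)
    (p₁ p₂ : ℕ) (hp₁ : p₁.Prime) (hp₂ : p₂.Prime) (hne : p₁ ≠ p₂)
    (v₀ w₀ : ℤ × NB × ℤ)
    (hpair : mukaiPair ipB v₀ w₀ = 1) :
    ∃ x, Relation.ReflTransGen (MukaiStep ipB ipBh halfB halfBh σ) (.inl (v₀, w₀)) x ∧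
      ((IsCoprime (rkOf x) (p₁ : ℤ) ∧ IsCoprime (rkOf x) (p₂ : ℤ)) ∨
        ((p₁ : ℤ) ∣ rkOf x ∧ ¬ (p₁ : ℤ) ∣ chiOf x ∧
          (p₂ : ℤ) ∣ chiOf x ∧ ¬ (p₂ : ℤ) ∣ rkOf x) ∨
        ((p₂ : ℤ) ∣ rkOf x ∧ ¬ (p₂ : ℤ) ∣ chiOf x ∧
          (p₁ : ℤ) ∣ chiOf x ∧ ¬ (p₁ : ℤ) ∣ rkOf x)) := by

  classical
  -- notation
  set r : ℤ := v₀.1 with hr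
  set χ : ℤ := v₀.2.2 with hχ
  set A : ℤ := ipB v₀.2.1 w₀.2.1 with hA
  set hh : ℤ := halfB w₀.2.1 with hhh
  have hAeq : A = 1 + r * w₀.2.2 + χ * w₀.1 := by
    unfold mukaiPair at hpair; linarith
  set f : ℤ → ℤ := fun n => χ + n * A + r * n ^ 2 * hh with hf
  -- the twisted/swapped candidates and the paths to them
  have stepTwist : ∀ n : ℤ, MukaiStep ipB ipBh halfB halfBh σ (.inl (v₀, w₀))
      (.inl (twistT ipB halfB w₀.2.1 n v₀, twistT ipB halfB w₀.2.1 n w₀)) := by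
    intro n
    exact Or.inr (Or.inr (Or.inl ⟨v₀, w₀, w₀.2.1, n, rfl, rfl⟩))
  have stepPoin : ∀ n : ℤ, MukaiStep ipB ipBh halfB halfBh σ
      (.inl (twistT ipB halfB w₀.2.1 n v₀, twistT ipB halfB w₀.2.1 n w₀))
      (.inr (poincareT σ (twistT ipB halfB w₀.2.1 n v₀),
        poincareT σ (twistT ipB halfB w₀.2.1 n w₀))) := by
    intro n
    exact Or.inr (Or.inr (Or.inr (Or.inr (Or.inl ⟨_, _, rfl, rfl⟩))))
  have pathT : ∀ n : ℤ, Relation.ReflTransGen (MukaiStep ipB ipBh halfB halfBh σ)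
      (.inl (v₀, w₀))
      (.inl (twistT ipB halfB w₀.2.1 n v₀, twistT ipB halfB w₀.2.1 n w₀)) :=
    fun n => Relation.ReflTransGen.single (stepTwist n)
  have pathTP : ∀ n : ℤ, Relation.ReflTransGen (MukaiStep ipB ipBh halfB halfBh σ)
      (.inl (v₀, w₀))
      (.inr (poincareT σ (twistT ipB halfB w₀.2.1 n v₀),
        poincareT σ (twistT ipB halfB w₀.2.1 n w₀))) :=
    fun n => (pathT n).tail (stepPoin n)
  -- rank/chi of the candidates
  have rkT : ∀ n : ℤ, rkOf (NBh := NBh)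
      (.inl (twistT ipB halfB w₀.2.1 n v₀, twistT ipB halfB w₀.2.1 n w₀)) = r := fun n => rfl
  have chiT : ∀ n : ℤ, chiOf (NBh := NBh)
      (.inl (twistT ipB halfB w₀.2.1 n v₀, twistT ipB halfB w₀.2.1 n w₀)) = f n := fun n => rfl
  have rkTP : ∀ n : ℤ, rkOf (NB := NB)
      (.inr (poincareT σ (twistT ipB halfB w₀.2.1 n v₀),
        poincareT σ (twistT ipB halfB w₀.2.1 n w₀))) = f n := fun n => rfl
  -- key fact: if p divides r, then some twist makes χ not divisible by p
  have key : ∀ p : ℕ, p.Prime → (p:ℤ) ∣ r → ∃ n : ℤ, ¬ (p:ℤ) ∣ f n := by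
    intro p hp hpr
    by_contra hall
    push_neg at hall
    have h0 : (p:ℤ) ∣ χ := by simpa [hf] using hall 0
    have h1 := hall 1
    have hAd : (p:ℤ) ∣ A := by
      have h2 := dvd_sub (dvd_sub h1 h0) (hpr.mul_right (1 ^ 2 * hh))
      have : χ + 1 * A + r * 1 ^ 2 * hh - χ - r * (1 ^ 2 * hh) = A := by ring
      rwa [this] at h2
    have hone : (p:ℤ) ∣ 1 := by
      have h3 := dvd_sub (dvd_sub hAd (hpr.mul_right w₀.2.2)) (h0.mul_right w₀.1)
      have : A - r * w₀.2.2 - χ * w₀.1 = 1 := by rw [hAeq]; ring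
      rwa [this] at h3
    exact (Nat.prime_iff_prime_int.mp hp).not_dvd_one hone
  -- congruence: f n ≡ f m mod p when n ≡ m mod p
  have key2 : ∀ (p : ℤ) (n m : ℤ), p ∣ (n - m) → ¬ p ∣ f m → ¬ p ∣ f n := by
    intro p n m hd hm hfn
    apply hm
    have heq : f m = f n - (n - m) * (A + r * (n + m) * hh) := by simp only [hf]; ring
    rw [heq]
    exact dvd_sub hfn (hd.mul_right _)
  have hco : IsCoprime (p₁:ℤ) (p₂:ℤ) := by
    rw [Nat.isCoprime_iff_coprime]; exact (Nat.coprime_primes hp₁ hp₂).mpr hne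
  by_cases h1r : (p₁:ℤ) ∣ r
  · by_cases h2r : (p₂:ℤ) ∣ r
    · -- both divide r : twist then swap
      obtain ⟨n₁, hn₁⟩ := key p₁ hp₁ h1r
      obtain ⟨n₂, hn₂⟩ := key p₂ hp₂ h2r
      obtain ⟨n, hd1, hd2⟩ := stmt15.crtZ hco n₁ n₂
      refine ⟨_, pathTP n, Or.inl ?_⟩
      rw [rkTP n]
      exact ⟨stmt15.coprime_of_not_dvd hp₁ (key2 _ n n₁ hd1 hn₁),
        stmt15.coprime_of_not_dvd hp₂ (key2 _ n n₂ hd2 hn₂)⟩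
    · -- p₁ ∣ r, p₂ ∤ r
      obtain ⟨n₁, hn₁⟩ := key p₁ hp₁ h1r
      by_cases hall : ∀ n : ℤ, (p₂:ℤ) ∣ f n
      · -- mixed case, no swap
        refine ⟨_, pathT n₁, Or.inr (Or.inl ?_)⟩
        rw [rkT n₁, chiT n₁]
        exact ⟨h1r, hn₁, hall n₁, h2r⟩
      · push_neg at hall
        obtain ⟨n₂, hn₂⟩ := hall
        obtain ⟨n, hd1, hd2⟩ := stmt15.crtZ hco n₁ n₂
        refine ⟨_, pathTP n, Or.inl ?_⟩
        rw [rkTP n]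
        exact ⟨stmt15.coprime_of_not_dvd hp₁ (key2 _ n n₁ hd1 hn₁),
          stmt15.coprime_of_not_dvd hp₂ (key2 _ n n₂ hd2 hn₂)⟩
  · by_cases h2r : (p₂:ℤ) ∣ r
    · -- p₂ ∣ r, p₁ ∤ r
      obtain ⟨n₂, hn₂⟩ := key p₂ hp₂ h2r
      by_cases hall : ∀ n : ℤ, (p₁:ℤ) ∣ f n
      · refine ⟨_, pathT n₂, Or.inr (Or.inr ?_)⟩
        rw [rkT n₂, chiT n₂]
        exact ⟨h2r, hn₂, hall n₂, h1r⟩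
      · push_neg at hall
        obtain ⟨n₁, hn₁⟩ := hall
        obtain ⟨n, hd1, hd2⟩ := stmt15.crtZ hco n₁ n₂
        refine ⟨_, pathTP n, Or.inl ?_⟩
        rw [rkTP n]
        exact ⟨stmt15.coprime_of_not_dvd hp₁ (key2 _ n n₁ hd1 hn₁),
          stmt15.coprime_of_not_dvd hp₂ (key2 _ n n₂ hd2 hn₂)⟩
    · -- neither divides r : done immediately
      exact ⟨.inl (v₀, w₀), Relation.ReflTransGen.refl,
        Or.inl ⟨stmt15.coprime_of_not_dvd hp₁ h1r, stmt15.coprime_of_not_dvd hp₂ h2r⟩⟩
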